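/- arXiv:1612.01872 — 3 statements merged into one kernel-verified Lean document; each statement's English description precedes it below -/
import Mathlib

section
/- Let X_1, X_2, ..., X_N be random variables on a probability space taking values in a countable set Ω = S ∪ {0}, and suppose X_1 ∈ S almost surely. Fix states x_1, ..., x_N with x_n ∈ S and suppose P(X_k = x_k) > 0 and P(X_k ∈ S) > 0 for all k ≤ n. Define w_1 = 1 and, for 1 < k ≤ n, the incremental weight w̃_k = [P(X_k = x_k | X_k ∈ S) / P(X_k = x_k)] · [P(X_{k-1} = x_{k-1}) / P(X_{k-1} = x_{k-1} | X_{k-1} ∈ S)], and set w_n = ∏_{k=2}^n w̃_k. Then w_n = 1 / P(X_n ∈ S). -/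
/-!
Since `x k ∈ S`, the event `{X k = x k}` lies inside `{X k ∈ S}`, so the conditional
probabilities cancel against the unconditional ones and each incremental weight is
`P(X (k-1) ∈ S) / P(X k ∈ S)`. The product then telescopes to `P(X 1 ∈ S) / P(X n ∈ S)`.
-/

open MeasureTheory Finset

section Telescope

variable {G₀ : Type*} [CommGroupWithZero G₀]

theorem prod_Icc_sub_one_div_eq_div (f : ℕ → G₀) {m n : ℕ} (hmn : m ≤ n)
    (hf : ∀ i ∈ Icc m n, f i ≠ 0) :
    ∏ k ∈ Icc (m + 1) n, f (k - 1) / f k = f m / f n := by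
  induction n, hmn using Nat.le_induction with
  | base => simp [div_self (hf m (by simp))]
  | succ n hmn ih =>
    rw [prod_Icc_succ_top (by omega), ih fun i hi => hf i (by simp at hi ⊢; omega),
      Nat.add_sub_cancel, div_mul_div_cancel₀ (hf n (by simp; omega))]

end Telescope

section ConditionalRatio

variable {Ω : Type*} [MeasurableSpace Ω] (P : Measure Ω) {A B : Set Ω}

theorem toReal_cond_div_toReal_of_subset (hAB : A ⊆ B) (hA : (P A).toReal ≠ 0) :
    (P (A ∩ B)).toReal / (P B).toReal / (P A).toReal = (P B).toReal⁻¹ := by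
  rw [Set.inter_eq_left.2 hAB, div_div_cancel_left' hA]

theorem toReal_div_toReal_cond_of_subset (hAB : A ⊆ B) (hA : (P A).toReal ≠ 0) :
    (P A).toReal / ((P (A ∩ B)).toReal / (P B).toReal) = (P B).toReal := by
  rw [Set.inter_eq_left.2 hAB, div_div_cancel₀ hA]

end ConditionalRatio

theorem smc_weight_eq_inv_survival_prob_general
    {Ωp : Type*} [MeasurableSpace Ωp] (P : Measure Ωp)
    {α : Type*} (S : Set α)
    (X : ℕ → Ωp → α)
    (n : ℕ) (hn1 : 1 ≤ n)
    (x : ℕ → α) (hxS : ∀ k, 1 ≤ k → k ≤ n → x k ∈ S)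
    -- `X_1 ∈ S` almost surely
    (hinit : P {ω | X 1 ω ∈ S} = 1)
    (hpos : ∀ k, 1 ≤ k → k ≤ n → 0 < (P {ω | X k ω = x k}).toReal)
    (hposS : ∀ k, 1 ≤ k → k ≤ n → 0 < (P {ω | X k ω ∈ S}).toReal)
    -- the incremental weights `w̃_k`, defined using conditional probabilities
    -- `P(A ∣ B) = P(A ∩ B) / P(B)`
    (wtil : ℕ → ℝ)
    (hwtil : ∀ k, 2 ≤ k → k ≤ n → wtil k =
      ((P ({ω | X k ω = x k} ∩ {ω | X k ω ∈ S})).toReal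
          / (P {ω | X k ω ∈ S}).toReal
        / (P {ω | X k ω = x k}).toReal)
      * ((P {ω | X (k-1) ω = x (k-1)}).toReal
        / ((P ({ω | X (k-1) ω = x (k-1)} ∩ {ω | X (k-1) ω ∈ S})).toReal
            / (P {ω | X (k-1) ω ∈ S}).toReal)))
    -- `w_n = ∏_{k=2}^n w̃_k` (with `w_1 = 1`, the empty product)
    (w : ℕ → ℝ)
    (hw : ∀ m, 1 ≤ m → m ≤ n → w m = ∏ k ∈ Finset.Icc 2 m, wtil k) :
    w n = 1 / (P {ω | X n ω ∈ S}).toReal := by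
  set s : ℕ → ℝ := fun k => (P {ω | X k ω ∈ S}).toReal
  have hsubset : ∀ k, 1 ≤ k → k ≤ n → {ω | X k ω = x k} ⊆ {ω | X k ω ∈ S} :=
    fun k hk hkn ω (hω : X k ω = x k) => show X k ω ∈ S from hω ▸ hxS k hk hkn
  have hwtil_eq : ∀ k ∈ Icc 2 n, wtil k = s (k - 1) / s k := by
    intro k hk
    obtain ⟨hk2, hkn⟩ := mem_Icc.1 hk
    rw [hwtil k hk2 hkn,
      toReal_cond_div_toReal_of_subset P (hsubset k (by omega) hkn) (hpos k (by omega) hkn).ne',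
      toReal_div_toReal_cond_of_subset P (hsubset (k - 1) (by omega) (by omega))
        (hpos (k - 1) (by omega) (by omega)).ne', inv_mul_eq_div]
  rw [hw n hn1 le_rfl, prod_congr rfl hwtil_eq,
    prod_Icc_sub_one_div_eq_div s hn1 fun k hk => (hposS k (mem_Icc.1 hk).1 (mem_Icc.1 hk).2).ne']
  simp [s, hinit]

/-- In the SMC sampler for LCDs with the bootstrap forward kernel and optimal
backward kernel, the unnormalized importance weight of a non-absorbed particle
at time `t_n` equals `1 / P(X(t_n) ∈ S)`. -/
theorem smc_weight_eq_inv_survival_prob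
    {Ωp : Type*} [MeasurableSpace Ωp] (P : Measure Ωp) [IsProbabilityMeasure P]
    {α : Type*} [Countable α] (S : Set α) (zero : α) (hzero : zero ∉ S)
    (N : ℕ) (X : ℕ → Ωp → α)
    (hrange : ∀ k ω, X k ω ∈ S ∪ {zero})
    (n : ℕ) (hn1 : 1 ≤ n) (hnN : n ≤ N)
    (x : ℕ → α) (hxS : ∀ k, 1 ≤ k → k ≤ n → x k ∈ S)
    -- `X_1 ∈ S` almost surely
    (hinit : P {ω | X 1 ω ∈ S} = 1)
    (hpos : ∀ k, 1 ≤ k → k ≤ n → 0 < (P {ω | X k ω = x k}).toReal)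
    (hposS : ∀ k, 1 ≤ k → k ≤ n → 0 < (P {ω | X k ω ∈ S}).toReal)
    -- the incremental weights `w̃_k`, defined using conditional probabilities
    -- `P(A ∣ B) = P(A ∩ B) / P(B)`
    (wtil : ℕ → ℝ)
    (hwtil : ∀ k, 2 ≤ k → k ≤ n → wtil k =
      ((P ({ω | X k ω = x k} ∩ {ω | X k ω ∈ S})).toReal
          / (P {ω | X k ω ∈ S}).toReal
        / (P {ω | X k ω = x k}).toReal)
      * ((P {ω | X (k-1) ω = x (k-1)}).toReal
        / ((P ({ω | X (k-1) ω = x (k-1)} ∩ {ω | X (k-1) ω ∈ S})).toReal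
            / (P {ω | X (k-1) ω ∈ S}).toReal)))
    -- `w_n = ∏_{k=2}^n w̃_k` (with `w_1 = 1`, the empty product)
    (w : ℕ → ℝ) (hw1 : w 1 = 1)
    (hw : ∀ m, 1 ≤ m → m ≤ n → w m = ∏ k ∈ Finset.Icc 2 m, wtil k) :
    w n = 1 / (P {ω | X n ω ∈ S}).toReal :=
  smc_weight_eq_inv_survival_prob_general P S X n hn1 x hxS hinit hpos hposS wtil hwtil w hw
end

section
/- Fix a real δ ∈ (0,1) and integers N1 ≥ 2 and N2 ≥ max(5, 1/(1−δ)). Set p1 = N1/(N1 + δN2), p2 = δN2/(N1 + δN2), f1(x) = x(N1 − 1)/(N1 − x), f2(x) = x + (1 − x)/N2, V(x) = x/(1 − x), K = δN2/((N2 − 1)(N1 + δN2)), and d(x, y) = min{1, |1/(1−x) − 1/(1−y)|}. Let S = {x ∈ (0,1) : V(x) < 4K}. Then there exists s ∈ (0, 1) such that for all x, y ∈ S: p1 · d(f1(x), f1(y)) + p2 · d(f2(x), f2(y)) ≤ s. (Via the synchronous coupling this shows W_d(P(x,·), P(y,·)) ≤ s for all x, y ∈ S, i.e. the sublevel set S of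 the Lyapunov function is d-small.) -/
/-!
In the coordinate `u(x) = 1/(1-x) = 1 + V(x)` both branches of the chain are affine:
`u ∘ f1 = ((N1-1)/N1) u + 1/N1` contracts, and `u ∘ f2 = (N2/(N2-1)) u` expands only mildly.
On `S` the coordinate `u` varies by less than `4K`, and `4K ≤ 4/(N2+1)` because
`N2 ≥ 1/(1-δ)` means `δ N2 ≤ N2 - 1` and `N1 ≥ 2`; so after either branch `u` varies
by at most `(N2/(N2-1)) · 4/(N2+1) ≤ 5/6` when `N2 ≥ 5`; hence each `d`-term, and therefore
their convex combination, is at most `5/6`.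
-/

lemma one_div_one_sub_mul_sub_one_div_sub {N x : ℝ} (hN : N ≠ 0) (hx : x ≠ 1) (hxN : x ≠ N) :
    1 / (1 - x * (N - 1) / (N - x)) = (N - 1) / N * (1 / (1 - x)) + 1 / N := by
  have hx' : 1 - x ≠ 0 := sub_ne_zero.2 (Ne.symm hx)
  have hxN' : N - x ≠ 0 := sub_ne_zero.2 (Ne.symm hxN)
  rw [show 1 - x * (N - 1) / (N - x) = N * (1 - x) / (N - x) by field_simp; ring]
  field_simp
  ring

lemma one_div_one_sub_add_one_sub_div {N x : ℝ} (hN : N ≠ 0) :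
    1 / (1 - (x + (1 - x) / N)) = N / (N - 1) * (1 / (1 - x)) := by
  rw [show 1 - (x + (1 - x) / N) = (1 - x) * (N - 1) / N by field_simp; ring]
  rw [one_div_div, div_mul_div_comm, mul_one, mul_comm (N - 1)]

lemma abs_one_div_one_sub_sub_lt {x y r : ℝ} (hx : x ∈ Set.Ico 0 1) (hy : y ∈ Set.Ico 0 1)
    (hxr : x / (1 - x) < r) (hyr : y / (1 - y) < r) :
    |1 / (1 - x) - 1 / (1 - y)| < r := by
  have hx1 : 1 - x ≠ 0 := sub_ne_zero.2 hx.2.ne'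
  have hy1 : 1 - y ≠ 0 := sub_ne_zero.2 hy.2.ne'
  have hxV : 1 / (1 - x) = 1 + x / (1 - x) := by field_simp; ring
  have hyV : 1 / (1 - y) = 1 + y / (1 - y) := by field_simp; ring
  rw [hxV, hyV, add_sub_add_left_eq_sub]
  exact abs_sub_lt_of_nonneg_of_lt (div_nonneg hx.1 (sub_pos.2 hx.2).le) hxr
    (div_nonneg hy.1 (sub_pos.2 hy.2).le) hyr

lemma abs_one_div_one_sub_mul_sub_one_div_sub_le {N x y : ℝ} (hN : 1 ≤ N) (hx : x < 1)
    (hy : y < 1) :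
    |1 / (1 - x * (N - 1) / (N - x)) - 1 / (1 - y * (N - 1) / (N - y))|
      ≤ |1 / (1 - x) - 1 / (1 - y)| := by
  have hN0 : N ≠ 0 := by positivity
  rw [one_div_one_sub_mul_sub_one_div_sub hN0 hx.ne (by linarith),
    one_div_one_sub_mul_sub_one_div_sub hN0 hy.ne (by linarith),
    add_sub_add_right_eq_sub, ← mul_sub, abs_mul]
  have hc : |(N - 1) / N| ≤ 1 := by
    rw [abs_of_nonneg (by bound), div_le_one (by positivity)]
    linarith
  exact mul_le_of_le_one_left (abs_nonneg _) hc

lemma abs_one_div_one_sub_add_one_sub_div_sub {N x y : ℝ} (hN : 1 < N) :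
    |1 / (1 - (x + (1 - x) / N)) - 1 / (1 - (y + (1 - y) / N))|
      = N / (N - 1) * |1 / (1 - x) - 1 / (1 - y)| := by
  have hN0 : N ≠ 0 := by positivity
  rw [one_div_one_sub_add_one_sub_div hN0, one_div_one_sub_add_one_sub_div hN0, ← mul_sub,
    abs_mul, abs_of_pos (div_pos (by linarith) (by linarith))]

lemma div_sub_one_mul_add_le_one_div_add_one {a m n : ℝ} (ha : 0 ≤ a) (han : a ≤ n - 1)
    (hm : 2 ≤ m) (hn : 1 < n) :
    a / ((n - 1) * (m + a)) ≤ 1 / (n + 1) := by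
  rw [div_le_div_iff₀ (by nlinarith) (by linarith)]
  nlinarith

lemma div_sub_one_mul_four_div_add_one_le {N : ℝ} (hN : 5 ≤ N) :
    N / (N - 1) * (4 / (N + 1)) ≤ 5 / 6 := by
  rw [div_mul_div_comm, div_le_div_iff₀ (by nlinarith) (by norm_num)]
  nlinarith

/-- The sublevel set `S = {x ∈ (0,1) : V(x) < 4K}` of the Lyapunov function is
`d`-small for the weight chain kernel: via the synchronous coupling, there is
`s ∈ (0,1)` with `p1·d(f1 x, f1 y) + p2·d(f2 x, f2 y) ≤ s` for all `x, y ∈ S`. -/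
theorem weight_chain_small_set
    (δ : ℝ) (hδ : δ ∈ Set.Ioo (0 : ℝ) 1)
    (N1 N2 : ℤ) (hN1 : 2 ≤ N1) (hN2 : max 5 (1 / (1 - δ)) ≤ (N2 : ℝ))
    (p1 p2 K : ℝ) (f1 f2 V : ℝ → ℝ) (d : ℝ → ℝ → ℝ) (S : Set ℝ)
    (hp1 : p1 = (N1 : ℝ) / ((N1 : ℝ) + δ * N2))
    (hp2 : p2 = δ * (N2 : ℝ) / ((N1 : ℝ) + δ * N2))
    (hf1 : ∀ x, f1 x = x * ((N1 : ℝ) - 1) / ((N1 : ℝ) - x))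
    (hf2 : ∀ x, f2 x = x + (1 - x) / (N2 : ℝ))
    (hV : ∀ x, V x = x / (1 - x))
    (hK : K = δ * (N2 : ℝ) / (((N2 : ℝ) - 1) * ((N1 : ℝ) + δ * N2)))
    (hd : ∀ x y, d x y = min 1 |1 / (1 - x) - 1 / (1 - y)|)
    (hS : S = {x ∈ Set.Ioo (0 : ℝ) 1 | V x < 4 * K}) :
    ∃ s ∈ Set.Ioo (0 : ℝ) 1, ∀ x ∈ S, ∀ y ∈ S,
      p1 * d (f1 x) (f1 y) + p2 * d (f2 x) (f2 y) ≤ s := by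
  obtain ⟨hδ0, hδ1⟩ := hδ
  have hN1' : (2 : ℝ) ≤ N1 := by exact_mod_cast hN1
  have hN2' : (5 : ℝ) ≤ N2 := le_of_max_le_left hN2
  have hδN2 : δ * N2 ≤ N2 - 1 := by
    have := (div_le_iff₀ (sub_pos.2 hδ1)).1 (le_of_max_le_right hN2)
    linarith
  have hK4 : 4 * K ≤ 4 / (N2 + 1) := by
    rw [← mul_one_div, hK]
    exact mul_le_mul_of_nonneg_left
      (div_sub_one_mul_add_le_one_div_add_one (by positivity) hδN2 hN1' (by linarith)) (by norm_num)
  have hB := div_sub_one_mul_four_div_add_one_le hN2'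
  refine ⟨5 / 6, ⟨by norm_num, by norm_num⟩, fun x hx y hy => ?_⟩
  rw [hS, Set.mem_ofPred_eq, hV] at hx hy
  have hu : |1 / (1 - x) - 1 / (1 - y)| ≤ 4 / (N2 + 1) :=
    (abs_one_div_one_sub_sub_lt (Set.Ioo_subset_Ico_self hx.1) (Set.Ioo_subset_Ico_self hy.1)
      hx.2 hy.2).le.trans hK4
  have hd1 : d (f1 x) (f1 y) ≤ 5 / 6 := by
    rw [hd, hf1, hf1]
    have hN2ge : 1 ≤ (N2 : ℝ) / (N2 - 1) := (one_le_div (by linarith)).2 (by linarith)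
    exact (min_le_right _ _).trans <|
      (abs_one_div_one_sub_mul_sub_one_div_sub_le (by linarith) hx.1.2 hy.1.2).trans <|
        hu.trans <| (le_mul_of_one_le_left (by positivity) hN2ge).trans hB
  have hd2 : d (f2 x) (f2 y) ≤ 5 / 6 := by
    rw [hd, hf2, hf2, abs_one_div_one_sub_add_one_sub_div_sub (by linarith)]
    exact (min_le_right _ _).trans
      ((mul_le_mul_of_nonneg_left hu (div_pos (by linarith) (by linarith)).le).trans hB)
  have hp : p1 + p2 = 1 := by
    rw [hp1, hp2, ← add_div, div_self (by positivity)]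
  simpa only [smul_eq_mul, Set.mem_Iic] using
    convex_Iic (5 / 6 : ℝ) hd1 hd2 (by rw [hp1]; positivity) (by rw [hp2]; positivity) hp
end

section
/- Fix a real δ ∈ (0,1) and integers N1 ≥ 2 and N2 ≥ max(5, 1/(1−δ)). Set p1 = N1/(N1 + δN2), p2 = δN2/(N1 + δN2), f1(x) = x(N1 − 1)/(N1 − x) and f2(x) = x + (1 − x)/N2. Then there exists exactly one probability measure μ on ℝ, supported on the open interval (0,1), that is invariant for the Markov kernel P moving x to f1(x) with probability p1 and to f2(x) with probability p2: that is, there is a unique probability measure μ on (0,1) such that for every bounded measurable g, ∫ g dμ = ∫ (p1 · g(f1(x)) + p2 · g(f2(x))) dμ(x). -/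
/-!
In the odds coordinate `u = x / (1 - x)` the two moves become affine: `f1` acts as `u ↦ a1 * u`
and `f2` as `u ↦ a2 * u + b`, where `a1 = (N1 - 1) / N1 < 1 < a2 = N2 / (N2 - 1)` and
`b = 1 / (N2 - 1)`. The bound `N2 ≥ 1 / (1 - δ)` gives `p1 * a1 + p2 * a2 ≤ 1`, hence, by strict
concavity of the square root, `ρ = p1 * √a1 + p2 * √a2 < 1`.

Uniqueness: moving two points with the same coin flips shrinks `√|u - v|` by the factor `ρ` on
average, so the iterates `Pⁿ g` of a bounded Lipschitz function flatten out and any two invariant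
laws give `g` the same integral. Existence: `√u` is a Lyapunov function, `P √u ≤ ρ √u + p2 √b`, so
the laws of the chain started at `0` are tight; they increase stochastically, so their cdfs
decrease to the cdf of an invariant law, which has no atom at `0` because `p2 > 0`.
-/

open MeasureTheory Set Filter Topology ProbabilityTheory
open scoped NNReal

section MixedMaps

variable {X : Type*}

/-- The kernel `P` acting on functions; `mixMap` is the same kernel acting on measures. -/
def mixComp (p1 p2 : ℝ) (f1 f2 : X → X) (g : X → ℝ) : X → ℝ :=
  fun x => p1 * g (f1 x) + p2 * g (f2 x)

noncomputable def mixMap [MeasurableSpace X] (p1 p2 : ℝ) (f1 f2 : X → X) (μ : Measure X) :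
    Measure X :=
  ENNReal.ofReal p1 • μ.map f1 + ENNReal.ofReal p2 • μ.map f2

def IsMixInvariant [MeasurableSpace X] (p1 p2 : ℝ) (f1 f2 : X → X) (μ : Measure X) : Prop :=
  ∀ g : X → ℝ, Measurable g → (∃ C, ∀ x, |g x| ≤ C) →
    ∫ x, g x ∂μ = ∫ x, mixComp p1 p2 f1 f2 g x ∂μ

variable {p1 p2 : ℝ} {f1 f2 : X → X}

lemma abs_mix_le (hp1 : 0 ≤ p1) (hp2 : 0 ≤ p2) (a b : ℝ) :
    |p1 * a + p2 * b| ≤ p1 * |a| + p2 * |b| := by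
  simpa [abs_mul, abs_of_nonneg hp1, abs_of_nonneg hp2] using abs_add_le (p1 * a) (p2 * b)

lemma abs_mixComp_le (hp1 : 0 ≤ p1) (hp2 : 0 ≤ p2) (hp : p1 + p2 = 1) {g : X → ℝ} {C : ℝ}
    (hg : ∀ x, |g x| ≤ C) (x : X) : |mixComp p1 p2 f1 f2 g x| ≤ C :=
  calc |p1 * g (f1 x) + p2 * g (f2 x)|
      ≤ p1 * |g (f1 x)| + p2 * |g (f2 x)| := abs_mix_le hp1 hp2 _ _
    _ ≤ p1 * C + p2 * C := by gcongr <;> apply hg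
    _ = C := by rw [← add_mul, hp, one_mul]

lemma abs_mixComp_sub_le (hp1 : 0 ≤ p1) (hp2 : 0 ≤ p2) {d : X → X → ℝ} {ρ L : ℝ} (hL : 0 ≤ L)
    (hd : ∀ x y, p1 * d (f1 x) (f1 y) + p2 * d (f2 x) (f2 y) ≤ ρ * d x y)
    {g : X → ℝ} (hg : ∀ x y, |g x - g y| ≤ L * d x y) (x y : X) :
    |mixComp p1 p2 f1 f2 g x - mixComp p1 p2 f1 f2 g y| ≤ ρ * L * d x y :=
  calc |mixComp p1 p2 f1 f2 g x - mixComp p1 p2 f1 f2 g y|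
      = |p1 * (g (f1 x) - g (f1 y)) + p2 * (g (f2 x) - g (f2 y))| := by
        unfold mixComp; congr 1; ring
    _ ≤ p1 * |g (f1 x) - g (f1 y)| + p2 * |g (f2 x) - g (f2 y)| := abs_mix_le hp1 hp2 _ _
    _ ≤ p1 * (L * d (f1 x) (f1 y)) + p2 * (L * d (f2 x) (f2 y)) := by gcongr <;> apply hg
    _ = L * (p1 * d (f1 x) (f1 y) + p2 * d (f2 x) (f2 y)) := by ring
    _ ≤ L * (ρ * d x y) := by gcongr; exact hd x y
    _ = ρ * L * d x y := by ring

lemma abs_iterate_mixComp_le (hp1 : 0 ≤ p1) (hp2 : 0 ≤ p2) (hp : p1 + p2 = 1) {g : X → ℝ}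
    {C : ℝ} (hg : ∀ x, |g x| ≤ C) (n : ℕ) (x : X) : |(mixComp p1 p2 f1 f2)^[n] g x| ≤ C := by
  induction n generalizing x with
  | zero => exact hg x
  | succ n ih =>
    rw [Function.iterate_succ_apply']
    exact abs_mixComp_le hp1 hp2 hp ih x

lemma abs_iterate_mixComp_sub_le (hp1 : 0 ≤ p1) (hp2 : 0 ≤ p2) {d : X → X → ℝ} {ρ L : ℝ}
    (hρ : 0 ≤ ρ) (hL : 0 ≤ L)
    (hd : ∀ x y, p1 * d (f1 x) (f1 y) + p2 * d (f2 x) (f2 y) ≤ ρ * d x y)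
    {g : X → ℝ} (hg : ∀ x y, |g x - g y| ≤ L * d x y) (n : ℕ) (x y : X) :
    |(mixComp p1 p2 f1 f2)^[n] g x - (mixComp p1 p2 f1 f2)^[n] g y| ≤ ρ ^ n * L * d x y := by
  induction n generalizing x y with
  | zero => simpa using hg x y
  | succ n ih =>
    rw [Function.iterate_succ_apply', pow_succ', mul_assoc ρ]
    exact abs_mixComp_sub_le hp1 hp2 (by positivity) hd ih x y

variable [MeasurableSpace X]

lemma Measurable.iterate_mixComp {g : X → ℝ} (hg : Measurable g) (hf1 : Measurable f1)
    (hf2 : Measurable f2) (n : ℕ) : Measurable ((mixComp p1 p2 f1 f2)^[n] g) := by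
  induction n with
  | zero => exact hg
  | succ n ih =>
    rw [Function.iterate_succ_apply']
    unfold mixComp; fun_prop

lemma IsMixInvariant.integral_iterate {μ : Measure X} (hμ : IsMixInvariant p1 p2 f1 f2 μ)
    (hp1 : 0 ≤ p1) (hp2 : 0 ≤ p2) (hp : p1 + p2 = 1) (hf1 : Measurable f1) (hf2 : Measurable f2)
    {g : X → ℝ} (hg : Measurable g) {C : ℝ} (hgC : ∀ x, |g x| ≤ C) (n : ℕ) :
    ∫ x, g x ∂μ = ∫ x, (mixComp p1 p2 f1 f2)^[n] g x ∂μ := by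
  induction n with
  | zero => rfl
  | succ n ih =>
    rw [ih, Function.iterate_succ_apply']
    exact hμ _ (hg.iterate_mixComp hf1 hf2 n) ⟨C, abs_iterate_mixComp_le hp1 hp2 hp hgC n⟩

theorem IsMixInvariant.integral_eq_of_contraction {μ ν : Measure X} [IsProbabilityMeasure μ]
    [IsProbabilityMeasure ν] (hμ : IsMixInvariant p1 p2 f1 f2 μ)
    (hν : IsMixInvariant p1 p2 f1 f2 ν) (hp1 : 0 ≤ p1) (hp2 : 0 ≤ p2) (hp : p1 + p2 = 1)
    (hf1 : Measurable f1) (hf2 : Measurable f2) {d : X → X → ℝ} {ρ : ℝ} (hρ0 : 0 ≤ ρ)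
    (hρ1 : ρ < 1) (hd : ∀ x y, p1 * d (f1 x) (f1 y) + p2 * d (f2 x) (f2 y) ≤ ρ * d x y)
    {g : X → ℝ} (hg : Measurable g) {C : ℝ} (hgC : ∀ x, |g x| ≤ C) {L : ℝ} (hL : 0 ≤ L)
    (hgd : ∀ x y, |g x - g y| ≤ L * d x y) :
    ∫ x, g x ∂μ = ∫ x, g x ∂ν := by
  set P := mixComp p1 p2 f1 f2
  have hmeas (n : ℕ) : Measurable (P^[n] g) := hg.iterate_mixComp hf1 hf2 n
  have hbdd (n : ℕ) (x : X) : ‖P^[n] g x‖ ≤ C := abs_iterate_mixComp_le hp1 hp2 hp hgC n x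
  have hint {m : Measure X} [IsProbabilityMeasure m] (n : ℕ) : Integrable (P^[n] g) m :=
    .of_bound (hmeas n).aestronglyMeasurable C (.of_forall (hbdd n))
  have hdiff (n : ℕ) : ∫ q, P^[n] g q.1 - P^[n] g q.2 ∂(μ.prod ν) = ∫ x, g x ∂μ - ∫ x, g x ∂ν := by
    rw [integral_sub ((hint n).comp_fst ν) ((hint n).comp_snd μ), integral_fun_fst,
      integral_fun_snd, probReal_univ, probReal_univ, one_smul, one_smul,
      hμ.integral_iterate hp1 hp2 hp hf1 hf2 hg hgC n,
      hν.integral_iterate hp1 hp2 hp hf1 hf2 hg hgC n]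
  have hpoint (q : X × X) : Tendsto (fun n => P^[n] g q.1 - P^[n] g q.2) atTop (𝓝 0) := by
    refine squeeze_zero_norm (abs_iterate_mixComp_sub_le hp1 hp2 hρ0 hL hd hgd · q.1 q.2) ?_
    simpa [mul_assoc] using (tendsto_pow_atTop_nhds_zero_of_lt_one hρ0 hρ1).mul_const
      (L * d q.1 q.2)
  have hlim : Tendsto (fun n => ∫ q, P^[n] g q.1 - P^[n] g q.2 ∂(μ.prod ν)) atTop (𝓝 0) := by
    rw [← integral_zero (X × X) ℝ]
    exact tendsto_integral_of_dominated_convergence (fun _ => C + C)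
      (fun n => ((hmeas n).comp measurable_fst).sub ((hmeas n).comp measurable_snd)
        |>.aestronglyMeasurable) (integrable_const _)
      (fun n => .of_forall fun q => (norm_sub_le _ _).trans (add_le_add (hbdd n _) (hbdd n _)))
      (.of_forall hpoint)
  simp_rw [hdiff] at hlim
  exact sub_eq_zero.mp (tendsto_const_nhds_iff.mp hlim)

lemma mixMap_apply (μ : Measure X) (hf1 : Measurable f1) (hf2 : Measurable f2) {s : Set X}
    (hs : MeasurableSet s) :
    mixMap p1 p2 f1 f2 μ s =
      ENNReal.ofReal p1 * μ (f1 ⁻¹' s) + ENNReal.ofReal p2 * μ (f2 ⁻¹' s) := by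
  simp [mixMap, Measure.map_apply hf1 hs, Measure.map_apply hf2 hs]

lemma isProbabilityMeasure_mixMap (hp1 : 0 ≤ p1) (hp2 : 0 ≤ p2) (hp : p1 + p2 = 1)
    (hf1 : Measurable f1) (hf2 : Measurable f2) (μ : Measure X) [IsProbabilityMeasure μ] :
    IsProbabilityMeasure (mixMap p1 p2 f1 f2 μ) := by
  constructor
  rw [mixMap_apply μ hf1 hf2 .univ, preimage_univ, preimage_univ, measure_univ, mul_one, mul_one,
    ← ENNReal.ofReal_add hp1 hp2, hp, ENNReal.ofReal_one]

lemma isProbabilityMeasure_iterate_mixMap (hp1 : 0 ≤ p1) (hp2 : 0 ≤ p2) (hp : p1 + p2 = 1)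
    (hf1 : Measurable f1) (hf2 : Measurable f2) (μ : Measure X) [IsProbabilityMeasure μ] (n : ℕ) :
    IsProbabilityMeasure ((mixMap p1 p2 f1 f2)^[n] μ) := by
  induction n with
  | zero => assumption
  | succ n ih =>
    rw [Function.iterate_succ_apply']
    exact isProbabilityMeasure_mixMap hp1 hp2 hp hf1 hf2 _

lemma lintegral_mixMap (μ : Measure X) (hf1 : Measurable f1) (hf2 : Measurable f2)
    {w : X → ENNReal} (hw : Measurable w) :
    ∫⁻ x, w x ∂(mixMap p1 p2 f1 f2 μ) =
      ∫⁻ x, ENNReal.ofReal p1 * w (f1 x) + ENNReal.ofReal p2 * w (f2 x) ∂μ := by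
  rw [mixMap, lintegral_add_measure, lintegral_smul_measure, lintegral_smul_measure,
    lintegral_map hw hf1, lintegral_map hw hf2, lintegral_add_left (by fun_prop),
    lintegral_const_mul _ (by fun_prop), lintegral_const_mul _ (by fun_prop), smul_eq_mul,
    smul_eq_mul]

theorem lintegral_iterate_mixMap_le (hp1 : 0 ≤ p1) (hp2 : 0 ≤ p2) (hp : p1 + p2 = 1)
    (hf1 : Measurable f1) (hf2 : Measurable f2) {w : X → ENNReal} (hw : Measurable w)
    {R K₀ K : ENNReal}
    (hdrift : ∀ x, ENNReal.ofReal p1 * w (f1 x) + ENNReal.ofReal p2 * w (f2 x) ≤ R * w x + K₀)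
    (hK : R * K + K₀ ≤ K) (μ : Measure X) [IsProbabilityMeasure μ] (hμ : ∫⁻ x, w x ∂μ ≤ K)
    (n : ℕ) : ∫⁻ x, w x ∂((mixMap p1 p2 f1 f2)^[n] μ) ≤ K := by
  induction n generalizing μ with
  | zero => exact hμ
  | succ n ih =>
    have := isProbabilityMeasure_mixMap hp1 hp2 hp hf1 hf2 μ
    refine ih _ ?_
    calc ∫⁻ x, w x ∂(mixMap p1 p2 f1 f2 μ)
        ≤ ∫⁻ x, R * w x + K₀ ∂μ := by
          rw [lintegral_mixMap μ hf1 hf2 hw]; exact lintegral_mono hdrift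
      _ = R * ∫⁻ x, w x ∂μ + K₀ := by
          rw [lintegral_add_right _ measurable_const, lintegral_const_mul _ hw, lintegral_const,
            measure_univ, mul_one]
      _ ≤ K := le_trans (by gcongr) hK

lemma isMixInvariant_of_mixMap_eq_self (hp1 : 0 ≤ p1) (hp2 : 0 ≤ p2)
    (hf1 : Measurable f1) (hf2 : Measurable f2) {μ : Measure X} [IsFiniteMeasure μ]
    (hμ : mixMap p1 p2 f1 f2 μ = μ) : IsMixInvariant p1 p2 f1 f2 μ := by
  rintro g hg ⟨C, hC⟩
  have hint (m : Measure X) [IsFiniteMeasure m] : Integrable g m :=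
    .of_bound hg.aestronglyMeasurable C (.of_forall hC)
  conv_lhs => rw [← hμ]
  unfold mixMap mixComp
  rw [integral_add_measure, integral_smul_measure, integral_smul_measure,
    integral_map hf1.aemeasurable hg.aestronglyMeasurable,
    integral_map hf2.aemeasurable hg.aestronglyMeasurable, ENNReal.toReal_ofReal hp1,
    ENNReal.toReal_ofReal hp2, integral_add, integral_const_mul, integral_const_mul]
  · rfl
  · exact ((hint _).comp_measurable hf1).const_mul p1
  · exact ((hint _).comp_measurable hf2).const_mul p2
  · exact (hint _).smul_measure ENNReal.ofReal_ne_top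
  · exact (hint _).smul_measure ENNReal.ofReal_ne_top

theorem IsMixInvariant.map {Y : Type*} [MeasurableSpace Y] {h1 h2 : Y → Y} {μ : Measure X}
    (hμ : IsMixInvariant p1 p2 f1 f2 μ) {φ : X → Y} (hφ : Measurable φ) (hh1 : Measurable h1)
    (hh2 : Measurable h2) (hconj1 : ∀ᵐ x ∂μ, φ (f1 x) = h1 (φ x))
    (hconj2 : ∀ᵐ x ∂μ, φ (f2 x) = h2 (φ x)) :
    IsMixInvariant p1 p2 h1 h2 (μ.map φ) := by
  rintro g hg ⟨C, hC⟩
  rw [integral_map hφ.aemeasurable hg.aestronglyMeasurable,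
    integral_map hφ.aemeasurable (by unfold mixComp; fun_prop), hμ (fun x => g (φ x)) (hg.comp hφ)
      ⟨C, fun x => hC (φ x)⟩]
  refine integral_congr_ae ?_
  filter_upwards [hconj1, hconj2] with x hx1 hx2
  simp only [mixComp, hx1, hx2]

end MixedMaps

theorem ext_of_forall_integral_eq_of_lipschitzWith {Ω : Type*} [PseudoEMetricSpace Ω]
    [MeasurableSpace Ω] [BorelSpace Ω] {μ ν : Measure Ω} [IsFiniteMeasure μ] [IsFiniteMeasure ν]
    (h : ∀ (g : Ω → ℝ) (K : ℝ≥0), LipschitzWith K g → (∀ x, g x ∈ Icc 0 1) →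
      ∫ x, g x ∂μ = ∫ x, g x ∂ν) :
    μ = ν := by
  have hclosed {F : Set Ω} (hF : IsClosed F) : μ F = ν F := by
    have hδ (n : ℕ) : (0 : ℝ) < 1 / (n + 1) := Nat.one_div_pos_of_nat
    have hδlim := tendsto_one_div_add_atTop_nhds_zero_nat (𝕜 := ℝ)
    have hμF := tendsto_integral_thickenedIndicator_of_isClosed μ hF hδ hδlim
    have hνF := tendsto_integral_thickenedIndicator_of_isClosed ν hF hδ hδlim
    have heq (n : ℕ) := h (fun x => thickenedIndicator (hδ n) F x) _
      (NNReal.isometry_coe.lipschitz.comp (lipschitzWith_thickenedIndicator (hδ n) F))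
      (fun x => ⟨NNReal.coe_nonneg _, NNReal.coe_le_one.mpr (thickenedIndicator_le_one _ F x)⟩)
    simp_rw [heq] at hμF
    exact (measureReal_eq_measureReal_iff (measure_ne_top μ F) (measure_ne_top ν F)).mp
      (tendsto_nhds_unique hμF hνF)
  exact ext_of_generate_finite _ (BorelSpace.measurable_eq.trans borel_eq_generateFrom_isClosed)
    isPiSystem_isClosed (fun F hF => hclosed hF) (hclosed isClosed_univ)

lemma abs_sub_le_sqrt_mul_sqrt_dist {α : Type*} [PseudoMetricSpace α] {g : α → ℝ} {K : ℝ≥0}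
    (hK : LipschitzWith K g) (hg : ∀ x, g x ∈ Icc 0 1) (x y : α) :
    |g x - g y| ≤ √K * √(dist x y) := by
  rw [← Real.sqrt_mul K.coe_nonneg]
  have hKd : 0 ≤ K * dist x y := by positivity
  rcases le_total (K * dist x y) 1 with h | h
  · calc |g x - g y| ≤ K * dist x y := by simpa [Real.dist_eq] using hK.dist_le_mul x y
      _ ≤ √(K * dist x y) := Real.le_sqrt_of_sq_le (by nlinarith)
  · calc |g x - g y| ≤ 1 := abs_sub_le_iff.mpr
          ⟨by linarith [(hg x).2, (hg y).1], by linarith [(hg x).1, (hg y).2]⟩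
      _ ≤ √(K * dist x y) := Real.one_le_sqrt.mpr h

theorem IsMixInvariant.eq_of_affine {p1 p2 a1 a2 b : ℝ} (hp1 : 0 ≤ p1) (hp2 : 0 ≤ p2)
    (hp : p1 + p2 = 1) (ha1 : 0 ≤ a1) (ha2 : 0 ≤ a2) (hρ : p1 * √a1 + p2 * √a2 < 1)
    {μ ν : Measure ℝ} [IsProbabilityMeasure μ] [IsProbabilityMeasure ν]
    (hμ : IsMixInvariant p1 p2 (a1 * ·) (a2 * · + b) μ)
    (hν : IsMixInvariant p1 p2 (a1 * ·) (a2 * · + b) ν) : μ = ν := by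
  have hd (u v : ℝ) : p1 * √|a1 * u - a1 * v| + p2 * √|(a2 * u + b) - (a2 * v + b)| ≤
      (p1 * √a1 + p2 * √a2) * √|u - v| := by
    rw [← mul_sub, add_sub_add_right_eq_sub, ← mul_sub, abs_mul, abs_mul, abs_of_nonneg ha1,
      abs_of_nonneg ha2, Real.sqrt_mul ha1, Real.sqrt_mul ha2]
    linarith
  refine ext_of_forall_integral_eq_of_lipschitzWith fun g K hK hg => ?_
  exact hμ.integral_eq_of_contraction hν hp1 hp2 hp (by fun_prop) (by fun_prop) (by positivity) hρ
    hd hK.continuous.measurable (C := 1) (fun x => abs_le.mpr ⟨by linarith [(hg x).1], (hg x).2⟩)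
    (Real.sqrt_nonneg K) (by simpa [Real.dist_eq] using abs_sub_le_sqrt_mul_sqrt_dist hK hg)

lemma bddBelow_range_cdf (μ : ℕ → Measure ℝ) (t : ℝ) : BddBelow (range fun n => cdf (μ n) t) :=
  ⟨0, by rintro _ ⟨n, rfl⟩; exact cdf_nonneg _ _⟩

lemma continuousWithinAt_iInf_cdf (μ : ℕ → Measure ℝ) (t : ℝ) :
    ContinuousWithinAt (fun s => ⨅ n, cdf (μ n) s) (Ici t) t := by
  have hbdd := bddBelow_range_cdf μ
  refine tendsto_order.2 ⟨fun a ha => ?_, fun b hb => ?_⟩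
  · filter_upwards [self_mem_nhdsWithin] with s hs
    exact ha.trans_le (le_ciInf fun n => (ciInf_le (hbdd t) n).trans (monotone_cdf _ hs))
  · obtain ⟨n, hn⟩ := exists_lt_of_ciInf_lt hb
    filter_upwards [tendsto_order.1 ((cdf (μ n)).right_continuous t) |>.2 b hn] with s hs
    exact (ciInf_le (hbdd s) n).trans_lt hs

theorem exists_cdf_eq_iInf (μ : ℕ → Measure ℝ) [∀ n, IsProbabilityMeasure (μ n)]
    (htight : ∀ ε > 0, ∃ t, ∀ n, 1 - ε ≤ cdf (μ n) t) :
    ∃ ν : Measure ℝ, IsProbabilityMeasure ν ∧ ∀ t, cdf ν t = ⨅ n, cdf (μ n) t := by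
  have hbdd := bddBelow_range_cdf μ
  let F : StieltjesFunction ℝ :=
    ⟨fun s => ⨅ n, cdf (μ n) s,
      fun s s' h => ciInf_mono (hbdd s) fun n => monotone_cdf _ h,
      continuousWithinAt_iInf_cdf μ⟩
  have hF0 : ∀ s, 0 ≤ F s := fun s => le_ciInf fun n => cdf_nonneg _ _
  have hF1 : ∀ s, F s ≤ 1 := fun s => (ciInf_le (hbdd s) 0).trans (cdf_le_one _ _)
  have hbot : Tendsto F atBot (𝓝 0) :=
    tendsto_of_tendsto_of_tendsto_of_le_of_le tendsto_const_nhds (tendsto_cdf_atBot (μ 0)) hF0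
      fun s => ciInf_le (hbdd s) 0
  have htop : Tendsto F atTop (𝓝 1) := by
    refine tendsto_order.2 ⟨fun a ha => ?_, fun b hb => .of_forall fun s => (hF1 s).trans_lt hb⟩
    obtain ⟨t, ht⟩ := htight ((1 - a) / 2) (by linarith)
    filter_upwards [eventually_ge_atTop t] with s hs
    calc a < 1 - (1 - a) / 2 := by linarith
      _ ≤ F t := le_ciInf ht
      _ ≤ F s := F.mono hs
  exact ⟨F.measure, F.isProbabilityMeasure hbot htop,
    fun t => by rw [cdf_measure_stieltjesFunction F hbot htop]⟩

lemma one_sub_div_sqrt_le_cdf (ν : Measure ℝ) [IsProbabilityMeasure ν] {k t : ℝ} (hk : 0 ≤ k)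
    (ht : 0 < t) (hν : ∫⁻ u, ENNReal.ofReal √u ∂ν ≤ ENNReal.ofReal k) :
    1 - k / √t ≤ cdf ν t := by
  have hsqrt : 0 < √t := Real.sqrt_pos.mpr ht
  have hmarkov : ENNReal.ofReal √t * ν (Ioi t) ≤ ENNReal.ofReal k :=
    calc ENNReal.ofReal √t * ν (Ioi t)
        ≤ ENNReal.ofReal √t * ν {u | ENNReal.ofReal √t ≤ ENNReal.ofReal √u} := by
          gcongr
          exact fun u hu => ENNReal.ofReal_le_ofReal (Real.sqrt_le_sqrt (le_of_lt hu))
      _ ≤ ∫⁻ u, ENNReal.ofReal √u ∂ν := mul_meas_ge_le_lintegral₀ (by fun_prop) _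
      _ ≤ ENNReal.ofReal k := hν
  have htail : ν.real (Ioi t) ≤ k / √t := by
    rw [le_div_iff₀ hsqrt, mul_comm, measureReal_def, ← ENNReal.toReal_ofReal hsqrt.le,
      ← ENNReal.toReal_mul]
    exact ENNReal.toReal_le_of_le_ofReal hk hmarkov
  rw [cdf_eq_real, ← compl_Ioi, probReal_compl_eq_one_sub measurableSet_Ioi]
  linarith

lemma tight_of_lintegral_sqrt_le (μ : ℕ → Measure ℝ) [∀ n, IsProbabilityMeasure (μ n)] {k : ℝ}
    (hk : 0 ≤ k) (hμ : ∀ n, ∫⁻ u, ENNReal.ofReal √u ∂(μ n) ≤ ENNReal.ofReal k) :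
    ∀ ε > 0, ∃ t, ∀ n, 1 - ε ≤ cdf (μ n) t := by
  intro ε hε
  have ht : 0 < (k / ε) ^ 2 + 1 := by positivity
  refine ⟨(k / ε) ^ 2 + 1, fun n => le_trans ?_ (one_sub_div_sqrt_le_cdf (μ n) hk ht (hμ n))⟩
  have hsqrt : k / ε ≤ √((k / ε) ^ 2 + 1) := Real.le_sqrt_of_sq_le (by linarith)
  rw [div_le_iff₀ hε] at hsqrt
  rw [sub_le_sub_iff_left, div_le_iff₀ (Real.sqrt_pos.mpr ht)]
  linarith

lemma cdf_dirac_of_lt {a t : ℝ} (ht : t < a) : cdf (Measure.dirac a) t = 0 := by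
  simp [cdf_eq_real, measureReal_def, Measure.dirac_apply' a measurableSet_Iic, not_le.mpr ht]

lemma cdf_dirac_of_le {a t : ℝ} (ht : a ≤ t) : cdf (Measure.dirac a) t = 1 := by
  simp [cdf_eq_real, measureReal_def, Measure.dirac_apply' a measurableSet_Iic, ht]

section OrderIsoMaps

variable {p1 p2 : ℝ} (h1 h2 : ℝ ≃o ℝ)

lemma cdf_mixMap (hp1 : 0 ≤ p1) (hp2 : 0 ≤ p2) (hp : p1 + p2 = 1) (μ : Measure ℝ)
    [IsProbabilityMeasure μ] (t : ℝ) :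
    cdf (mixMap p1 p2 h1 h2 μ) t = p1 * cdf μ (h1.symm t) + p2 * cdf μ (h2.symm t) := by
  have := isProbabilityMeasure_mixMap hp1 hp2 hp h1.continuous.measurable h2.continuous.measurable μ
  rw [cdf_eq_real, cdf_eq_real, cdf_eq_real, measureReal_def,
    mixMap_apply μ h1.continuous.measurable h2.continuous.measurable measurableSet_Iic,
    h1.preimage_Iic, h2.preimage_Iic, ENNReal.toReal_add (by finiteness) (by finiteness),
    ENNReal.toReal_mul, ENNReal.toReal_mul, ENNReal.toReal_ofReal hp1, ENNReal.toReal_ofReal hp2,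
    measureReal_def, measureReal_def]

lemma cdf_mixMap_mono (hp1 : 0 ≤ p1) (hp2 : 0 ≤ p2) (hp : p1 + p2 = 1) {μ μ' : Measure ℝ}
    [IsProbabilityMeasure μ] [IsProbabilityMeasure μ'] (h : ∀ t, cdf μ t ≤ cdf μ' t) (t : ℝ) :
    cdf (mixMap p1 p2 h1 h2 μ) t ≤ cdf (mixMap p1 p2 h1 h2 μ') t := by
  rw [cdf_mixMap h1 h2 hp1 hp2 hp, cdf_mixMap h1 h2 hp1 hp2 hp]
  gcongr <;> apply h

lemma cdf_mixMap_le_cdf_dirac (hp1 : 0 ≤ p1) (hp2 : 0 ≤ p2) (hp : p1 + p2 = 1) {a : ℝ}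
    (ha1 : a ≤ h1 a) (ha2 : a ≤ h2 a) (t : ℝ) :
    cdf (mixMap p1 p2 h1 h2 (Measure.dirac a)) t ≤ cdf (Measure.dirac a) t := by
  rcases lt_or_ge t a with ht | ht
  · have hlt (h : ℝ ≃o ℝ) (ha : a ≤ h a) : h.symm t < a :=
      h.symm_apply_lt.mpr (ht.trans_le ha)
    rw [cdf_mixMap h1 h2 hp1 hp2 hp, cdf_dirac_of_lt (hlt h1 ha1), cdf_dirac_of_lt (hlt h2 ha2),
      cdf_dirac_of_lt ht, mul_zero, mul_zero, add_zero]
  · have := isProbabilityMeasure_mixMap hp1 hp2 hp h1.continuous.measurable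
      h2.continuous.measurable (Measure.dirac a)
    rw [cdf_dirac_of_le ht]
    exact cdf_le_one _ _

theorem exists_mixMap_eq_self_of_tight (hp1 : 0 ≤ p1) (hp2 : 0 ≤ p2) (hp : p1 + p2 = 1) {a : ℝ}
    (ha1 : a ≤ h1 a) (ha2 : a ≤ h2 a)
    (htight : ∀ ε > 0, ∃ t, ∀ n, 1 - ε ≤ cdf ((mixMap p1 p2 h1 h2)^[n] (Measure.dirac a)) t) :
    ∃ ν : Measure ℝ, IsProbabilityMeasure ν ∧ (∀ t < a, cdf ν t = 0) ∧
      mixMap p1 p2 h1 h2 ν = ν := by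
  set T := mixMap p1 p2 h1 h2
  set μ : ℕ → Measure ℝ := fun n => T^[n] (Measure.dirac a)
  have hsucc (n : ℕ) : μ (n + 1) = T (μ n) := Function.iterate_succ_apply' T n _
  have hμ (n : ℕ) : IsProbabilityMeasure (μ n) := isProbabilityMeasure_iterate_mixMap hp1 hp2 hp
    h1.continuous.measurable h2.continuous.measurable _ n
  have hstep (n : ℕ) (t : ℝ) : cdf (μ (n + 1)) t ≤ cdf (μ n) t := by
    induction n generalizing t with
    | zero => exact cdf_mixMap_le_cdf_dirac h1 h2 hp1 hp2 hp ha1 ha2 t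
    | succ n ih =>
      calc cdf (μ (n + 2)) t = cdf (T (μ (n + 1))) t := by rw [hsucc]
        _ ≤ cdf (T (μ n)) t := cdf_mixMap_mono h1 h2 hp1 hp2 hp ih t
        _ = cdf (μ (n + 1)) t := by rw [hsucc]
  obtain ⟨ν, hν, hνF⟩ := exists_cdf_eq_iInf μ htight
  have hlim (t : ℝ) : Tendsto (fun n => cdf (μ n) t) atTop (𝓝 (cdf ν t)) := by
    rw [hνF]
    exact tendsto_atTop_ciInf (antitone_nat_of_succ_le (hstep · t)) (bddBelow_range_cdf μ t)
  refine ⟨ν, hν, fun t ht => ?_, ?_⟩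
  · refine le_antisymm ?_ (cdf_nonneg ν t)
    rw [hνF, ← cdf_dirac_of_lt ht]
    exact ciInf_le (bddBelow_range_cdf μ t) 0
  · have := isProbabilityMeasure_mixMap hp1 hp2 hp h1.continuous.measurable
      h2.continuous.measurable ν
    refine Measure.eq_of_cdf _ _ (StieltjesFunction.ext fun t => ?_)
    rw [cdf_mixMap h1 h2 hp1 hp2 hp]
    refine tendsto_nhds_unique ?_ ((hlim t).comp (tendsto_add_atTop_nat 1))
    convert ((hlim (h1.symm t)).const_mul p1).add ((hlim (h2.symm t)).const_mul p2) using 1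
    funext n
    exact (congrArg (cdf · t) (hsucc n)).trans (cdf_mixMap h1 h2 hp1 hp2 hp (μ n) t)

end OrderIsoMaps

lemma sqrt_mul_add_le {a b : ℝ} (ha : 0 ≤ a) (hb : 0 ≤ b) (u : ℝ) :
    √(a * u + b) ≤ √a * √u + √b := by
  rcases le_or_gt u 0 with hu | hu
  · rw [Real.sqrt_eq_zero_of_nonpos hu, mul_zero, zero_add]
    exact Real.sqrt_le_sqrt (by nlinarith)
  · refine Real.sqrt_le_iff.mpr ⟨by positivity, ?_⟩
    nlinarith [Real.sq_sqrt ha, Real.sq_sqrt hu.le, Real.sq_sqrt hb,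
      mul_nonneg (mul_nonneg (Real.sqrt_nonneg a) (Real.sqrt_nonneg u)) (Real.sqrt_nonneg b)]

lemma ofReal_sqrt_mix_affine_le {p1 p2 a1 a2 b : ℝ} (hp1 : 0 ≤ p1) (hp2 : 0 ≤ p2) (ha1 : 0 ≤ a1)
    (ha2 : 0 ≤ a2) (hb : 0 ≤ b) (u : ℝ) :
    ENNReal.ofReal p1 * ENNReal.ofReal √(a1 * u) + ENNReal.ofReal p2 * ENNReal.ofReal √(a2 * u + b)
      ≤ ENNReal.ofReal (p1 * √a1 + p2 * √a2) * ENNReal.ofReal √u + ENNReal.ofReal (p2 * √b) := by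
  have h2 : p2 * √(a2 * u + b) ≤ p2 * (√a2 * √u + √b) :=
    mul_le_mul_of_nonneg_left (sqrt_mul_add_le ha2 hb u) hp2
  rw [← ENNReal.ofReal_mul hp1, ← ENNReal.ofReal_mul hp2, ← ENNReal.ofReal_add (by positivity)
    (by positivity), ← ENNReal.ofReal_mul (by positivity), ← ENNReal.ofReal_add (by positivity)
    (by positivity), Real.sqrt_mul ha1]
  exact ENNReal.ofReal_le_ofReal (by nlinarith)

theorem exists_mixMap_affine_eq_self {p1 p2 a1 a2 b : ℝ} (hp1 : 0 ≤ p1) (hp2 : 0 < p2)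
    (hp : p1 + p2 = 1) (ha1 : 0 < a1) (ha2 : 0 < a2) (hb : 0 < b)
    (hρ : p1 * √a1 + p2 * √a2 < 1) :
    ∃ ν : Measure ℝ, IsProbabilityMeasure ν ∧ ν (Ioi 0) = 1 ∧
      mixMap p1 p2 (a1 * ·) (a2 * · + b) ν = ν := by
  set e1 : ℝ ≃o ℝ := OrderIso.mulLeft₀ a1 ha1
  set e2 : ℝ ≃o ℝ := (OrderIso.mulLeft₀ a2 ha2).trans (OrderIso.addRight b)
  set ρ := p1 * √a1 + p2 * √a2
  set c := p2 * √b
  have hK : ENNReal.ofReal ρ * ENNReal.ofReal (c / (1 - ρ)) + ENNReal.ofReal c ≤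
      ENNReal.ofReal (c / (1 - ρ)) := by
    have hρ1 : 0 < 1 - ρ := sub_pos.mpr hρ
    rw [← ENNReal.ofReal_mul (by positivity), ← ENNReal.ofReal_add (by positivity) (by positivity)]
    exact ENNReal.ofReal_le_ofReal (le_of_eq (by field_simp; ring))
  have hprob := isProbabilityMeasure_iterate_mixMap hp1 hp2.le hp e1.continuous.measurable
    e2.continuous.measurable (Measure.dirac 0)
  have hmoment := lintegral_iterate_mixMap_le hp1 hp2.le hp e1.continuous.measurable
    e2.continuous.measurable (w := fun u => ENNReal.ofReal √u) (by fun_prop)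
    (ofReal_sqrt_mix_affine_le hp1 hp2.le ha1.le ha2.le hb.le) hK (Measure.dirac 0) (by simp)
  obtain ⟨ν, hν, hν0, hinv⟩ := exists_mixMap_eq_self_of_tight e1 e2 hp1 hp2.le hp
    (by simp [e1]) (by simpa [e2] using hb.le)
    (tight_of_lintegral_sqrt_le _ (by positivity) hmoment)
  have hcdf0 : cdf ν 0 = 0 := by
    have h := congrArg (cdf · 0) hinv
    have he1 : e1.symm 0 = 0 := e1.symm_apply_eq.mpr (by simp [e1])
    have he2 : e2.symm 0 < 0 := e2.symm_apply_lt.mpr (by simpa [e2] using hb)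
    simp only [cdf_mixMap e1 e2 hp1 hp2.le hp, he1, hν0 _ he2, mul_zero, add_zero] at h
    have : p2 * cdf ν 0 = 0 := by linear_combination (-1 : ℝ) * h + cdf ν 0 * hp
    exact (mul_eq_zero.mp this).resolve_left hp2.ne'
  refine ⟨ν, hν, ?_, hinv⟩
  rw [← compl_Iic, prob_compl_eq_one_sub measurableSet_Iic, ← ofReal_cdf, hcdf0,
    ENNReal.ofReal_zero, tsub_zero]

section WeightChain

noncomputable def odds (x : ℝ) : ℝ := x / (1 - x)

noncomputable def ofOdds (u : ℝ) : ℝ := u / (1 + u)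

lemma measurable_odds : Measurable odds := by unfold odds; fun_prop

lemma measurable_ofOdds : Measurable ofOdds := by unfold ofOdds; fun_prop

lemma ofOdds_odds {x : ℝ} (hx : x < 1) : ofOdds (odds x) = x := by
  have : 1 - x ≠ 0 := by linarith
  unfold ofOdds odds
  field_simp
  ring

lemma ofOdds_mem_Ioo {u : ℝ} (hu : 0 < u) : ofOdds u ∈ Ioo 0 1 :=
  ⟨by unfold ofOdds; positivity, (div_lt_one (by linarith)).mpr (by linarith)⟩

variable {n m : ℝ}

lemma odds_f1 (hn : 1 < n) {x : ℝ} (hx : x < 1) :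
    odds (x * (n - 1) / (n - x)) = (n - 1) / n * odds x := by
  have h1 : 1 - x ≠ 0 := by linarith
  have h2 : n - x ≠ 0 := by linarith
  have h3 : n ≠ 0 := by linarith
  unfold odds
  rw [show 1 - x * (n - 1) / (n - x) = n * (1 - x) / (n - x) by field_simp; ring]
  field_simp

lemma odds_f2 (hm : 1 < m) {x : ℝ} (hx : x < 1) :
    odds (x + (1 - x) / m) = m / (m - 1) * odds x + 1 / (m - 1) := by
  have h1 : 1 - x ≠ 0 := by linarith
  have h2 : m - 1 ≠ 0 := by linarith
  have h3 : 1 - (x + (1 - x) / m) = (1 - x) * (m - 1) / m := by field_simp; ring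
  unfold odds
  rw [h3]
  field_simp

lemma ofOdds_f1 (hn : 1 < n) {u : ℝ} (hu : 0 ≤ u) :
    ofOdds ((n - 1) / n * u) = ofOdds u * (n - 1) / (n - ofOdds u) := by
  have h1 : 1 + u ≠ 0 := by linarith
  have h2 : n ≠ 0 := by linarith
  have h3 : n + (n - 1) * u ≠ 0 := by nlinarith
  unfold ofOdds
  rw [show n - u / (1 + u) = (n + (n - 1) * u) / (1 + u) by field_simp; ring]
  field_simp

lemma ofOdds_f2 (hm : 1 < m) {u : ℝ} (hu : 0 ≤ u) :
    ofOdds (m / (m - 1) * u + 1 / (m - 1)) = ofOdds u + (1 - ofOdds u) / m := by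
  have h1 : 1 + u ≠ 0 := by linarith
  have h2 : m - 1 ≠ 0 := by linarith
  have h3 : m * (1 + u) ≠ 0 := by positivity
  unfold ofOdds
  rw [show 1 + (m / (m - 1) * u + 1 / (m - 1)) = m * (1 + u) / (m - 1) by field_simp; ring]
  field_simp
  ring

lemma mix_sqrt_lt_one {δ : ℝ} (hn : 1 < n) (hm : 1 < m) (hδ : 0 < δ) (hδm : δ * m ≤ m - 1) :
    n / (n + δ * m) * √((n - 1) / n) + δ * m / (n + δ * m) * √(m / (m - 1)) < 1 := by
  have hs : 0 < n + δ * m := by positivity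
  have hmix : n / (n + δ * m) * ((n - 1) / n) + δ * m / (n + δ * m) * (m / (m - 1)) ≤ 1 := by
    rw [show n / (n + δ * m) * ((n - 1) / n) + δ * m / (n + δ * m) * (m / (m - 1)) =
        ((n - 1) * (m - 1) + δ * m * m) / ((n + δ * m) * (m - 1)) by
          field_simp [show m - 1 ≠ 0 by linarith],
      div_le_one (mul_pos hs (by linarith))]
    nlinarith
  have hne : (n - 1) / n ≠ m / (m - 1) := ne_of_lt <| ((div_lt_one (by linarith)).mpr
    (by linarith)).trans ((one_lt_div (by linarith)).mpr (by linarith))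
  calc _ < √(n / (n + δ * m) * ((n - 1) / n) + δ * m / (n + δ * m) * (m / (m - 1))) := by
        simpa using Real.strictConcaveOn_sqrt.2 (mem_Ici.mpr (by positivity : 0 ≤ (n - 1) / n))
          (mem_Ici.mpr (by positivity : 0 ≤ m / (m - 1))) hne (by positivity) (by positivity)
          (by field_simp)
    _ ≤ 1 := Real.sqrt_le_one.mpr hmix

theorem existsUnique_isMixInvariant_weightChain {p1 p2 : ℝ} (hn : 1 < n) (hm : 1 < m)
    (hp1 : 0 ≤ p1) (hp2 : 0 < p2) (hp : p1 + p2 = 1)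
    (hρ : p1 * √((n - 1) / n) + p2 * √(m / (m - 1)) < 1) :
    ∃! μ : Measure ℝ, IsProbabilityMeasure μ ∧ μ (Ioo 0 1) = 1 ∧
      IsMixInvariant p1 p2 (fun x => x * (n - 1) / (n - x)) (fun x => x + (1 - x) / m) μ := by
  have hf1 : Measurable fun x : ℝ => x * (n - 1) / (n - x) := by fun_prop
  have hf2 : Measurable fun x : ℝ => x + (1 - x) / m := by fun_prop
  obtain ⟨ν, hν, hνpos, hνfix⟩ := exists_mixMap_affine_eq_self hp1 hp2 hp
    (by positivity : 0 < (n - 1) / n) (by positivity : 0 < m / (m - 1))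
    (by positivity : 0 < 1 / (m - 1)) hρ
  have hνinv := isMixInvariant_of_mixMap_eq_self hp1 hp2.le (by fun_prop) (by fun_prop) hνfix
  have hνae : ∀ᵐ u ∂ν, 0 < u := (mem_ae_iff_prob_eq_one measurableSet_Ioi).mpr hνpos
  refine ⟨ν.map ofOdds,
    ⟨Measure.isProbabilityMeasure_map measurable_ofOdds.aemeasurable, ?_, ?_⟩, ?_⟩
  · rw [Measure.map_apply measurable_ofOdds measurableSet_Ioo]
    exact le_antisymm prob_le_one (hνpos ▸ measure_mono fun u hu => ofOdds_mem_Ioo hu)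
  · exact hνinv.map measurable_ofOdds hf1 hf2
      (by filter_upwards [hνae] with u hu using ofOdds_f1 hn hu.le)
      (by filter_upwards [hνae] with u hu using ofOdds_f2 hm hu.le)
  · rintro μ ⟨hμ, hμ1, hμinv⟩
    have hμae : ∀ᵐ x ∂μ, x ∈ Ioo 0 1 := (mem_ae_iff_prob_eq_one measurableSet_Ioo).mpr hμ1
    have := Measure.isProbabilityMeasure_map (μ := μ) measurable_odds.aemeasurable
    have hodds : μ.map odds = ν := (hμinv.map measurable_odds (by fun_prop) (by fun_prop)
      (by filter_upwards [hμae] with x hx using odds_f1 hn hx.2)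
      (by filter_upwards [hμae] with x hx using odds_f2 hm hx.2)).eq_of_affine hp1 hp2.le hp
        (by positivity) (by positivity) hρ hνinv
    calc μ = (μ.map odds).map ofOdds := by
          rw [Measure.map_map measurable_ofOdds measurable_odds,
            Measure.map_congr (by filter_upwards [hμae] with x hx using ofOdds_odds hx.2),
            Measure.map_id']
      _ = ν.map ofOdds := by rw [hodds]

end WeightChain

/-- There is exactly one probability measure on `ℝ`, supported on `(0,1)`,
that is invariant for the Markov kernel moving `x` to `f1(x)` with probability
`p1` and to `f2(x)` with probability `p2` (Theorem on Wasserstein convergence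
of the regional-resampling weight chain). -/
theorem weight_chain_unique_invariant_measure
    (δ : ℝ) (hδ : δ ∈ Set.Ioo (0 : ℝ) 1)
    (N1 N2 : ℤ) (hN1 : 2 ≤ N1) (hN2 : max 5 (1 / (1 - δ)) ≤ (N2 : ℝ))
    (p1 p2 : ℝ) (f1 f2 : ℝ → ℝ)
    (hp1 : p1 = (N1 : ℝ) / ((N1 : ℝ) + δ * N2))
    (hp2 : p2 = δ * (N2 : ℝ) / ((N1 : ℝ) + δ * N2))
    (hf1 : ∀ x, f1 x = x * ((N1 : ℝ) - 1) / ((N1 : ℝ) - x))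
    (hf2 : ∀ x, f2 x = x + (1 - x) / (N2 : ℝ)) :
    ∃! μ : Measure ℝ, IsProbabilityMeasure μ ∧ μ (Set.Ioo (0 : ℝ) 1) = 1 ∧
      ∀ g : ℝ → ℝ, Measurable g → (∃ C, ∀ x, |g x| ≤ C) →
        (∫ x, g x ∂μ) = ∫ x, (p1 * g (f1 x) + p2 * g (f2 x)) ∂μ := by
  obtain ⟨hδ0, hδ1⟩ := hδ
  obtain ⟨hN2five, hN2δ⟩ := max_le_iff.mp hN2
  have hn : (1 : ℝ) < N1 := by exact_mod_cast (by omega : (1 : ℤ) < N1)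
  have hm : (1 : ℝ) < N2 := by linarith
  have hδm : δ * N2 ≤ N2 - 1 := by
    rw [div_le_iff₀ (by linarith)] at hN2δ
    linarith
  obtain rfl : f1 = _ := funext hf1
  obtain rfl : f2 = _ := funext hf2
  subst hp1 hp2
  exact existsUnique_isMixInvariant_weightChain hn hm (by positivity) (by positivity)
    (by field_simp) (mix_sqrt_lt_one hn hm hδ0 hδm)
end
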